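/- The autoconvolution transform A is a contraction on (H_R, δ): for any sequences a, b, δ(A(a), A(b)) ≤ δ(a,b); moreover, for a ∈ U_R, δ(A^n(a), U(a)) ≤ 2^{-2(n+1)}, so the iterates A^n(a) converge to the fixed point U(a) ∈ B_R. -/

import Mathlib

open Finset PowerSeries
open scoped Classical

variable {R : Type*} [CommRing R] [Algebra ℚ R]

/-- Binomial convolution of sequences. -/
def bconv (a b : ℕ → R) : ℕ → R :=
  fun n => ∑ h ∈ range (n + 1), (n.choose h : R) * a h * b (n - h)

/-- The identity sequence (1,0,0,...). -/
def eseq : ℕ → R := fun n => if n = 0 then 1 else 0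

/-- The alternating sign transform. -/
def alt (a : ℕ → R) : ℕ → R := fun n => (-1) ^ n * a n

/-- Partial ordinary Bell polynomial `B_{n,k}(x₁,x₂,…)`, for a sequence `x` indexed
from 1, defined as the coefficient of `z^n` in `(∑_{m≥1} x_m z^m)^k`. -/
noncomputable def pBell (n k : ℕ) (x : ℕ → R) : R :=
  PowerSeries.coeff n ((PowerSeries.mk fun m => if m = 0 then 0 else x m) ^ k)

/-- Generalized binomial coefficient `C(1/2, k)`. -/
def halfChoose (k : ℕ) : ℚ :=
  (∏ j ∈ range k, ((1 : ℚ) / 2 - j)) / k.factorial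

/-- The ultrametric distance on sequences: `δ(a,b) = 2^{-k}` where `k` is the length of
the longest common initial segment, and `δ(a,b) = 0` if `a = b`. -/
noncomputable def delta (a b : ℕ → R) : ℝ :=
  if h : a = b then 0
  else (2 : ℝ) ^ (-(Nat.find (show ∃ n, a n ≠ b n by
    by_contra hc
    push_neg at hc
    exact h (funext hc)) : ℤ))

/-- The autoconvolution transform: it fixes `a 0` and the odd-indexed terms, and sets
`(𝒜 a) n = -(1/2) ∑_{h=1}^{n-1} C(n,h)(-1)^h a h a (n-h)` for even `n ≥ 2`. -/
noncomputable def autoconv (a : ℕ → R) : ℕ → R := fun n =>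
  if n = 0 then a 0
  else if Odd n then a n
  else algebraMap ℚ R (-(1 / 2)) *
    ∑ h ∈ Icc 1 (n - 1), (n.choose h : R) * (-1) ^ h * a h * a (n - h)

/-- The transform `𝒰`: it fixes `a 0` and the odd-indexed terms, and replaces the even
ones by the Bell polynomial expressions, producing (for `a ∈ U_R`) the unique element of
`B_R` with the same odd-indexed terms. -/
noncomputable def Utrans (a : ℕ → R) : ℕ → R := fun n =>
  if n = 0 then a 0
  else if Odd n then a n
  else (n.factorial : R) *
    ∑ k ∈ range (n / 2 + 1),
      algebraMap ℚ R (halfChoose k) *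
        pBell (n / 2 + k) (2 * k)
          (fun i => algebraMap ℚ R (1 / (2 * i - 1).factorial) * a (2 * i - 1))

/-!
The even entry `(𝒜 a)ₘ` involves only the entries `aₕ` with `0 < h < m`, and `𝒜` keeps all
other entries. This gives the contraction, and by induction `𝒜ⁿ a` agrees up to index `2n + 1`
with every fixed point of `𝒜` that has the same entries at `0` and at the odd indices.

That `𝒰 a` is such a fixed point is seen on exponential generating functions. Write the odd
part of the egf of `a` as `X · Q(X²)` (`Q = oddSeries a`); the Bell polynomial formula says that
the even part of the egf `f` of `𝒰 a` is `E(X²)` with `E = (1 + X Q²)^{1/2}` (`evenSeries a`).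
Hence `f(X) f(-X) = E(X²)² - X² Q(X²)² = 1`, i.e. `𝒰 a ∈ B_R`, and the coefficient of `X^m`,
`m` even, in this identity is the fixed-point equation `(𝒜 (𝒰 a))ₘ = (𝒰 a)ₘ`.
-/

lemma delta_self {α : Type*} (a : ℕ → α) : delta a a = 0 := dif_pos rfl

lemma delta_nonneg {α : Type*} (a b : ℕ → α) : 0 ≤ delta a b := by
  unfold delta
  split_ifs <;> positivity

lemma delta_le_of_eqOn_lt {α : Type*} {a b : ℕ → α} {N : ℕ} (h : ∀ m < N, a m = b m) :
    delta a b ≤ (2 : ℝ) ^ (-(N : ℤ)) := by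
  unfold delta
  split_ifs with hab
  · positivity
  · refine zpow_le_zpow_right₀ one_le_two (neg_le_neg (Int.ofNat_le.mpr ?_))
    exact Nat.le_find_iff _ _ |>.mpr fun m hm => not_not.mpr (h m hm)

lemma delta_map_le {α : Type*} {F : (ℕ → α) → ℕ → α}
    (hF : ∀ N a b, (∀ m < N, a m = b m) → ∀ m < N, F a m = F b m) (a b : ℕ → α) :
    delta (F a) (F b) ≤ delta a b := by
  by_cases hab : a = b
  · simp only [hab, delta_self, le_refl]
  · have hex : ∃ n, a n ≠ b n := by
      by_contra! h
      exact hab (funext h)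
    conv_rhs => rw [delta, dif_neg hab]
    exact delta_le_of_eqOn_lt (hF _ a b fun m hm => not_not.mp (Nat.find_min hex hm))

lemma autoconv_apply_of_eq_zero_or_odd (b : ℕ → R) {m : ℕ} (hm : m = 0 ∨ Odd m) :
    autoconv b m = b m := by
  rcases hm with rfl | hodd
  · simp [autoconv]
  · simp [autoconv, hodd, hodd.pos.ne']

lemma iterate_autoconv_apply_of_eq_zero_or_odd (b : ℕ → R) {m : ℕ} (hm : m = 0 ∨ Odd m)
    (n : ℕ) : autoconv^[n] b m = b m := by
  induction n with
  | zero => rfl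
  | succ n ih => rw [Function.iterate_succ_apply', autoconv_apply_of_eq_zero_or_odd _ hm, ih]

lemma autoconv_apply_congr {b c : ℕ → R} {m : ℕ} (hm : ¬(m = 0 ∨ Odd m))
    (hbc : ∀ i < m, b i = c i) : autoconv b m = autoconv c m := by
  rw [not_or] at hm
  simp only [autoconv, if_neg hm.1, if_neg hm.2]
  congr 1
  refine sum_congr rfl fun h hh => ?_
  rw [mem_Icc] at hh
  rw [hbc h (by omega), hbc (m - h) (by omega)]

lemma autoconv_eqOn_lt {b c : ℕ → R} {N : ℕ} (hbc : ∀ i < N, b i = c i) :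
    ∀ m < N, autoconv b m = autoconv c m := by
  intro m hm
  by_cases h : m = 0 ∨ Odd m
  · rw [autoconv_apply_of_eq_zero_or_odd _ h, autoconv_apply_of_eq_zero_or_odd _ h, hbc m hm]
  · exact autoconv_apply_congr h fun i hi => hbc i (hi.trans hm)

lemma delta_autoconv_le (a b : ℕ → R) : delta (autoconv a) (autoconv b) ≤ delta a b :=
  delta_map_le (fun _ _ _ => autoconv_eqOn_lt) a b

lemma neg_one_pow_sub_of_even {A : Type*} [Ring A] {m h : ℕ} (hm : Even m) (hh : h ≤ m) :
    (-1 : A) ^ (m - h) = (-1) ^ h := by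
  rw [neg_one_pow_eq_pow_mod_two, neg_one_pow_eq_pow_mod_two (n := h)]
  rw [Nat.even_iff] at hm
  congr 1
  omega

lemma bconv_alt_apply_of_even {A : Type*} [CommRing A] {u : ℕ → A} (hu : u 0 = 1) {m : ℕ}
    (hm : Even m) (hm0 : m ≠ 0) :
    bconv u (alt u) m =
      2 * u m + ∑ h ∈ Icc 1 (m - 1), (m.choose h : A) * (-1) ^ h * u h * u (m - h) := by
  have hrange : range (m + 1) = insert 0 (insert m (Icc 1 (m - 1))) := by
    ext h
    simp only [mem_range, mem_insert, mem_Icc]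
    omega
  rw [bconv, hrange, sum_insert (by simp; omega), sum_insert (by simp; omega)]
  simp only [alt, Nat.choose_zero_right, Nat.choose_self, Nat.sub_zero, Nat.sub_self, hu,
    hm.neg_one_pow, pow_zero, Nat.cast_one]
  have hmid : ∀ h ∈ Icc 1 (m - 1), (m.choose h : A) * u h * ((-1) ^ (m - h) * u (m - h)) =
      (m.choose h : A) * (-1) ^ h * u h * u (m - h) := by
    intro h hh
    rw [mem_Icc] at hh
    rw [neg_one_pow_sub_of_even hm (by omega)]
    ring
  rw [sum_congr rfl hmid]
  ring

lemma autoconv_apply_eq_sub_bconv_alt {u : ℕ → R} (hu : u 0 = 1) {m : ℕ}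
    (hm : ¬(m = 0 ∨ Odd m)) :
    autoconv u m = u m - algebraMap ℚ R (1 / 2) * bconv u (alt u) m := by
  rw [not_or, Nat.not_odd_iff_even] at hm
  have hhalf : algebraMap ℚ R (1 / 2) * 2 = 1 := by
    rw [← map_ofNat (algebraMap ℚ R), ← map_mul]
    norm_num
  rw [bconv_alt_apply_of_even hu hm.2 hm.1, autoconv, if_neg hm.1,
    if_neg (Nat.not_odd_iff_even.mpr hm.2), map_neg]
  linear_combination u m * hhalf

lemma autoconv_eq_self_of_bconv_alt_eq_eseq {u : ℕ → R} (hu0 : u 0 = 1)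
    (hu : bconv u (alt u) = eseq) : autoconv u = u := by
  funext m
  by_cases hm : m = 0 ∨ Odd m
  · exact autoconv_apply_of_eq_zero_or_odd u hm
  · rw [autoconv_apply_eq_sub_bconv_alt hu0 hm, hu, eseq, if_neg (not_or.mp hm).1, mul_zero,
      sub_zero]

lemma PowerSeries.coeff_subst_eq_sum_range {A S : Type*} [CommRing A] [CommRing S] [Algebra A S]
    {b : S⟦X⟧} (hb : constantCoeff b = 0) (f : A⟦X⟧) (n : ℕ) :
    coeff n (subst b f) = ∑ k ∈ range (n + 1), coeff k f • coeff n (b ^ k) := by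
  rw [coeff_subst' (HasSubst.of_constantCoeff_zero' hb)]
  apply finsum_eq_sum_of_support_subset
  intro k hk
  rw [Function.mem_support] at hk
  rw [coe_range, Set.mem_Iio, Nat.lt_succ_iff]
  by_contra hlt
  have : (X : S⟦X⟧) ^ k ∣ b ^ k := pow_dvd_pow_of_dvd (X_dvd_iff.mpr hb) k
  exact hk (by rw [X_pow_dvd_iff.mp this n (by omega), smul_zero])

lemma PowerSeries.rescale_neg_one_expand_two {A : Type*} [CommRing A] (φ : A⟦X⟧) :
    rescale (-1) (expand 2 two_ne_zero φ) = expand 2 two_ne_zero φ := by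
  ext n
  rw [coeff_rescale, coeff_expand]
  split_ifs with h
  · obtain ⟨k, rfl⟩ := h
    simp [pow_mul]
  · rw [mul_zero]

lemma halfChoose_eq_choose (k : ℕ) : halfChoose k = Ring.choose (1 / 2 : ℚ) k := by
  rw [Ring.choose_eq_smul, halfChoose, ← Polynomial.aeval_eq_smeval, Polynomial.aeval_def,
    Polynomial.eval₂_eq_eval_map, descPochhammer_map, descPochhammer_eval_eq_prod_range,
    smul_eq_mul, div_eq_inv_mul]

noncomputable def egf (u : ℕ → R) : R⟦X⟧ :=
  PowerSeries.mk fun n => algebraMap ℚ R (1 / n.factorial) * u n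

lemma algebraMap_one_div_factorial_mul_factorial (m : ℕ) :
    algebraMap ℚ R (1 / m.factorial) * (m.factorial : R) = 1 := by
  rw [← map_natCast (algebraMap ℚ R), ← map_mul, one_div_mul_cancel (by positivity), map_one]

lemma bconv_eq_factorial_mul_coeff_egf_mul (u v : ℕ → R) (n : ℕ) :
    bconv u v n = n.factorial * coeff n (egf u * egf v) := by
  rw [bconv, coeff_mul, Finset.Nat.sum_antidiagonal_eq_sum_range_succ_mk, mul_sum]
  refine sum_congr rfl fun h hh => ?_
  have hch : (n.choose h : R) = n.factorial *
      (algebraMap ℚ R (1 / h.factorial) * algebraMap ℚ R (1 / (n - h).factorial)) := by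
    rw [← map_natCast (algebraMap ℚ R), ← map_natCast (algebraMap ℚ R), ← map_mul, ← map_mul,
      Nat.cast_choose ℚ (Nat.lt_succ_iff.mp (mem_range.mp hh))]
    congr 1
    field_simp
  simp only [egf, coeff_mk, hch]
  ring

lemma egf_alt (u : ℕ → R) : egf (alt u) = rescale (-1) (egf u) := by
  ext n
  simp only [egf, alt, coeff_mk, coeff_rescale]
  ring

noncomputable def oddSeries (a : ℕ → R) : R⟦X⟧ :=
  PowerSeries.mk fun i => algebraMap ℚ R (1 / (2 * i + 1).factorial) * a (2 * i + 1)

noncomputable def evenSeries (a : ℕ → R) : R⟦X⟧ :=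
  subst (X * oddSeries a ^ 2) (binomialSeries R (1 / 2 : ℚ))

lemma evenSeries_sq (a : ℕ → R) : evenSeries a ^ 2 = 1 + X * oddSeries a ^ 2 := by
  have hT : HasSubst (X * oddSeries a ^ 2) :=
    HasSubst.of_constantCoeff_zero' (by simp)
  rw [evenSeries, ← subst_pow hT, pow_two (binomialSeries R _), ← binomialSeries_add, add_halves,
    ← Nat.cast_one, binomialSeries_nat, pow_one, ← coe_substAlgHom hT, map_add, map_one,
    coe_substAlgHom, subst_X hT]

lemma coeff_evenSeries (a : ℕ → R) (n : ℕ) :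
    coeff n (evenSeries a) = ∑ k ∈ range (n + 1),
      algebraMap ℚ R (halfChoose k) * coeff n ((X * oddSeries a ^ 2) ^ k) := by
  rw [evenSeries, coeff_subst_eq_sum_range (by simp)]
  simp only [binomialSeries_coeff, halfChoose_eq_choose, Algebra.smul_def, mul_one,
    Algebra.algebraMap_self, RingHom.id_apply]

lemma pBell_eq_coeff (a : ℕ → R) (n k : ℕ) :
    pBell (n + k) (2 * k)
        (fun i => algebraMap ℚ R (1 / (2 * i - 1).factorial) * a (2 * i - 1)) =
      coeff n ((X * oddSeries a ^ 2) ^ k) := by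
  have hP : (PowerSeries.mk fun m => if m = 0 then 0 else
      algebraMap ℚ R (1 / (2 * m - 1).factorial) * a (2 * m - 1)) = X * oddSeries a := by
    ext (_ | m)
    · simp
    · simp [oddSeries, coeff_succ_X_mul, Nat.mul_succ]
  rw [pBell, hP, show (X * oddSeries a) ^ (2 * k) = X ^ k * (X * oddSeries a ^ 2) ^ k by ring,
    coeff_X_pow_mul]

lemma Utrans_apply_of_eq_zero_or_odd (a : ℕ → R) {m : ℕ} (hm : m = 0 ∨ Odd m) :
    Utrans a m = a m := by
  rcases hm with rfl | hodd
  · simp [Utrans]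
  · simp [Utrans, hodd, hodd.pos.ne']

lemma coeff_egf_Utrans_even (a : ℕ → R) (ha : a 0 = 1) (n : ℕ) :
    coeff (2 * n) (egf (Utrans a)) = coeff n (evenSeries a) := by
  rw [egf, coeff_mk, coeff_evenSeries]
  rcases Nat.eq_zero_or_pos n with rfl | hn
  · simp [Utrans_apply_of_eq_zero_or_odd a (Or.inl rfl), ha, halfChoose]
  · have hne : 2 * n ≠ 0 := by omega
    have hodd : ¬ Odd (2 * n) := by simp
    simp only [Utrans, if_neg hne, if_neg hodd, Nat.mul_div_cancel_left n two_pos,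
      pBell_eq_coeff, ← mul_assoc, algebraMap_one_div_factorial_mul_factorial, one_mul]

lemma egf_Utrans (a : ℕ → R) (ha : a 0 = 1) :
    egf (Utrans a) =
      expand 2 two_ne_zero (evenSeries a) + X * expand 2 two_ne_zero (oddSeries a) := by
  ext m
  obtain ⟨j, rfl | rfl⟩ := Nat.even_or_odd' m
  · rw [coeff_egf_Utrans_even a ha, map_add, coeff_expand_mul]
    rcases Nat.eq_zero_or_pos j with rfl | hj
    · simp
    · rw [show 2 * j = (2 * j - 1) + 1 by omega, coeff_succ_X_mul,
        coeff_expand_of_not_dvd _ _ _ (by omega), add_zero]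
  · rw [map_add, coeff_expand_of_not_dvd _ _ _ (by omega), coeff_succ_X_mul, coeff_expand_mul,
      egf, oddSeries, coeff_mk, coeff_mk,
      Utrans_apply_of_eq_zero_or_odd a (Or.inr (odd_two_mul_add_one j)), zero_add]

lemma egf_Utrans_mul_egf_alt (a : ℕ → R) (ha : a 0 = 1) :
    egf (Utrans a) * egf (alt (Utrans a)) = 1 := by
  have hsq : expand 2 two_ne_zero (evenSeries a) ^ 2 =
      1 + X ^ 2 * expand 2 two_ne_zero (oddSeries a) ^ 2 := by
    rw [← map_pow, evenSeries_sq, map_add, map_one, map_mul, map_pow, expand_X]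
  rw [egf_alt, egf_Utrans a ha, map_add, map_mul, rescale_X, rescale_neg_one_expand_two,
    rescale_neg_one_expand_two, map_neg, map_one]
  linear_combination hsq

lemma bconv_Utrans_alt (a : ℕ → R) (ha : a 0 = 1) :
    bconv (Utrans a) (alt (Utrans a)) = eseq := by
  funext n
  rw [bconv_eq_factorial_mul_coeff_egf_mul, egf_Utrans_mul_egf_alt a ha, coeff_one, eseq]
  split_ifs with hn
  · simp [hn]
  · rw [mul_zero]

lemma autoconv_Utrans (a : ℕ → R) (ha : a 0 = 1) : autoconv (Utrans a) = Utrans a :=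
  autoconv_eq_self_of_bconv_alt_eq_eseq (by rw [Utrans_apply_of_eq_zero_or_odd a (Or.inl rfl), ha])
    (bconv_Utrans_alt a ha)

lemma iterate_autoconv_eqOn_Utrans (a : ℕ → R) (ha : a 0 = 1) (n : ℕ) :
    ∀ m < 2 * n + 2, autoconv^[n] a m = Utrans a m := by
  induction n with
  | zero =>
    intro m hm
    rw [Function.iterate_zero_apply,
      Utrans_apply_of_eq_zero_or_odd a (by interval_cases m <;> simp)]
  | succ n ih =>
    intro m hm
    by_cases hm' : m = 0 ∨ Odd m
    · rw [iterate_autoconv_apply_of_eq_zero_or_odd a hm', Utrans_apply_of_eq_zero_or_odd a hm']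
    · have hle : m ≤ 2 * n + 2 := by
        rw [not_or, Nat.not_odd_iff_even] at hm'
        obtain ⟨k, rfl⟩ := hm'.2
        omega
      rw [Function.iterate_succ_apply', ← autoconv_Utrans a ha]
      exact autoconv_apply_congr hm' fun i hi => ih i (by omega)

lemma two_zpow_neg_two_mul_succ (n : ℕ) : (2 : ℝ) ^ (-(2 * (n + 1) : ℤ)) = 4⁻¹ ^ (n + 1) := by
  rw [zpow_neg, show (2 * (n + 1) : ℤ) = ((2 * (n + 1) : ℕ) : ℤ) by push_cast; ring, zpow_natCast,
    pow_mul, inv_pow]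
  norm_num

/-- The autoconvolution transform is a contraction on `(H_R, δ)`; for `a ∈ U_R` its
iterates approach `𝒰(a)` at rate `δ(𝒜ⁿ(a), 𝒰(a)) ≤ 2^{-2(n+1)}`, hence converge to
`𝒰(a)`, which is a fixed point of `𝒜` and lies in `B_R`. -/
theorem autoconv_contraction :
    (∀ a b : ℕ → R, delta (autoconv a) (autoconv b) ≤ delta a b) ∧
    (∀ a : ℕ → R, a 0 = 1 →
      (∀ n : ℕ, delta (autoconv^[n] a) (Utrans a) ≤ (2 : ℝ) ^ (-(2 * (n + 1) : ℤ))) ∧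
      Filter.Tendsto (fun n => delta (autoconv^[n] a) (Utrans a)) Filter.atTop (nhds 0) ∧
      autoconv (Utrans a) = Utrans a ∧
      (Utrans a) 0 = 1 ∧ bconv (Utrans a) (alt (Utrans a)) = eseq) := by
  refine ⟨delta_autoconv_le, fun a ha => ?_⟩
  have hbound (n : ℕ) :
      delta (autoconv^[n] a) (Utrans a) ≤ (2 : ℝ) ^ (-(2 * (n + 1) : ℤ)) := by
    have h := delta_le_of_eqOn_lt (iterate_autoconv_eqOn_Utrans a ha n)
    rwa [show ((2 * n + 2 : ℕ) : ℤ) = 2 * (n + 1) by push_cast; ring] at h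
  have hgeom :
      Filter.Tendsto (fun n : ℕ => (2 : ℝ) ^ (-(2 * (n + 1) : ℤ))) Filter.atTop (nhds 0) := by
    simp only [two_zpow_neg_two_mul_succ]
    exact (tendsto_pow_atTop_nhds_zero_of_lt_one (by norm_num) (by norm_num)).comp
      (Filter.tendsto_add_atTop_nat 1)
  refine ⟨hbound, squeeze_zero (fun n => delta_nonneg _ _) hbound hgeom, autoconv_Utrans a ha,
    by rw [Utrans_apply_of_eq_zero_or_odd a (Or.inl rfl), ha], bconv_Utrans_alt a ha⟩
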